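/- For all integers 2 ≤ k ≤ n, the map sending a pair (f, i) with f ∈ PF_{n,k} and i ∈ {1,…,n+1} to the (n+1)-tuple obtained from f by inserting the value n+1 at position i is a bijection onto PF_{n+1,k}; consequently |PF_{n+1,k}| = (n+1)·|PF_{n,k}|. -/
import Mathlib


/-- A parking function of length `n`: an `n`-tuple of positive integers such that
for every `i ∈ {1,…,n}`, at least `i` of the entries are `≤ i`. -/
def IsParkingFunction (n : ℕ) (f : Fin n → ℕ) : Prop :=
  (∀ i, 1 ≤ f i) ∧
  ∀ i : Fin n, (i : ℕ) + 1 ≤ (Finset.univ.filter fun j => f j ≤ (i : ℕ) + 1).card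

/-- `f ∈ PF_{n,k}`: a parking function of length `n` in which the value `k` does not
occur but each of the values `k+1,…,n` does occur (`k` is the largest missing value). -/
def IsPFnk (n k : ℕ) (f : Fin n → ℕ) : Prop :=
  IsParkingFunction n f ∧ (∀ i, f i ≠ k) ∧ ∀ m, k < m → m ≤ n → ∃ i, f i = m

lemma count_insertNth (n : ℕ) (i : Fin (n + 1)) (a : ℕ) (f : Fin n → ℕ) (c : ℕ) :
    (Finset.univ.filter fun j => Fin.insertNth (α := fun _ => ℕ) i a f j ≤ c).card
      = (if a ≤ c then 1 else 0) + (Finset.univ.filter fun j => f j ≤ c).card := by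
  rw [Finset.card_filter, Finset.card_filter, Fin.sum_univ_succAbove _ i]
  simp

lemma pf_le (n : ℕ) (hn : 1 ≤ n) (f : Fin n → ℕ) (hf : IsParkingFunction n f) :
    ∀ j, f j ≤ n := by
  intro j
  have hlt : n - 1 < n := Nat.sub_lt hn one_pos
  have h := hf.2 ⟨n - 1, hlt⟩
  have hval : (n - 1) + 1 = n := Nat.succ_pred_eq_of_pos hn
  simp only [hval] at h
  have heq : (Finset.univ.filter fun j => f j ≤ n) = Finset.univ := by
    apply Finset.eq_of_subset_of_card_le (Finset.filter_subset _ _)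
    simpa using h
  have := heq ▸ (Finset.mem_univ j)
  exact (Finset.mem_filter.mp this).2

/-- In a parking function of length `n+1` (with `n ≥ 1`), the value `n+1` occurs
at most once. -/
lemma pf_unique_top (n : ℕ) (hn : 1 ≤ n) (g : Fin (n + 1) → ℕ)
    (hg : IsParkingFunction (n + 1) g) {i i' : Fin (n + 1)}
    (hi : g i = n + 1) (hi' : g i' = n + 1) : i = i' := by
  have hlt : n - 1 < n + 1 := by omega
  have h := hg.2 ⟨n - 1, hlt⟩
  have hval : (n - 1) + 1 = n := Nat.succ_pred_eq_of_pos hn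
  simp only [hval] at h
  -- complement has card ≤ 1
  have hcompl : (Finset.univ.filter fun j => ¬ g j ≤ n).card ≤ 1 := by
    have := Finset.card_filter_add_card_filter_not (s := Finset.univ)
      (p := fun j : Fin (n + 1) => g j ≤ n)
    simp only [Finset.card_univ, Fintype.card_fin] at this
    omega
  have hmem : ∀ j : Fin (n + 1), g j = n + 1 →
      j ∈ Finset.univ.filter fun j => ¬ g j ≤ n := by
    intro j hj
    simp [hj]
  exact Finset.card_le_one.mp hcompl i (hmem i hi) i' (hmem i' hi')

lemma maps_to_PFnk (n k : ℕ) (h2 : 2 ≤ k) (hkn : k ≤ n) (f : Fin n → ℕ)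
    (i : Fin (n + 1)) (hf : IsPFnk n k f) :
    IsPFnk (n + 1) k (i.insertNth (n + 1) f) := by
  obtain ⟨⟨hpos, hcount⟩, havoid, hhit⟩ := hf
  have hn1 : 1 ≤ n := le_trans (le_trans one_le_two h2) hkn
  have hfle : ∀ j, f j ≤ n := pf_le n hn1 f ⟨hpos, hcount⟩
  refine ⟨⟨?_, ?_⟩, ?_, ?_⟩
  · intro j
    by_cases hj : j = i
    · subst hj; simp
    · obtain ⟨z, hz⟩ := Fin.exists_succAbove_eq hj
      rw [← hz, Fin.insertNth_apply_succAbove]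
      exact hpos z
  · intro j
    rw [count_insertNth]
    by_cases hj : (j : ℕ) < n
    · have h := hcount ⟨j, hj⟩
      simp only at h
      split <;> omega
    · have hjn : (j : ℕ) = n := by omega
      have hfull : (Finset.univ.filter fun j' => f j' ≤ (j : ℕ) + 1) = Finset.univ := by
        apply Finset.eq_univ_of_forall
        intro x
        simp only [Finset.mem_filter, Finset.mem_univ, true_and]
        exact le_trans (hfle x) (by omega)
      rw [hfull]
      simp only [Finset.card_univ, Fintype.card_fin, hjn]
      split <;> omega
  · intro j
    by_cases hj : j = i
    · subst hj; simp; omega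
    · obtain ⟨z, hz⟩ := Fin.exists_succAbove_eq hj
      rw [← hz, Fin.insertNth_apply_succAbove]
      exact havoid z
  · intro m hkm hmn
    rcases Nat.lt_or_ge m (n + 1) with hm | hm
    · obtain ⟨j, hj⟩ := hhit m hkm (by omega)
      exact ⟨i.succAbove j, by rw [Fin.insertNth_apply_succAbove]; exact hj⟩
    · have : m = n + 1 := by omega
      exact ⟨i, by simp [this]⟩

/-- For `2 ≤ k ≤ n`, the map sending a pair `(f, i)` with `f ∈ PF_{n,k}` and
`i ∈ {1,…,n+1}` to the `(n+1)`-tuple obtained from `f` by inserting the value `n+1`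
at position `i` is a bijection onto `PF_{n+1,k}`; consequently
`|PF_{n+1,k}| = (n+1)·|PF_{n,k}|`. -/
theorem insert_bijection_PFnk (n k : ℕ) (h2 : 2 ≤ k) (hkn : k ≤ n) :
    Set.BijOn (fun p : (Fin n → ℕ) × Fin (n + 1) => p.2.insertNth (n + 1) p.1)
      {p | IsPFnk n k p.1} {g | IsPFnk (n + 1) k g} ∧
    Nat.card {g : Fin (n + 1) → ℕ // IsPFnk (n + 1) k g} =
      (n + 1) * Nat.card {f : Fin n → ℕ // IsPFnk n k f} := by
  have hn1 : 1 ≤ n := le_trans (le_trans one_le_two h2) hkn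
  have hbij : Set.BijOn (fun p : (Fin n → ℕ) × Fin (n + 1) => p.2.insertNth (n + 1) p.1)
      {p | IsPFnk n k p.1} {g | IsPFnk (n + 1) k g} := by
    refine ⟨?_, ?_, ?_⟩
    · intro p hp
      exact maps_to_PFnk n k h2 hkn p.1 p.2 hp
    · rintro ⟨f, i⟩ hp ⟨f', i'⟩ hp' heq
      simp only at heq
      have hg : IsPFnk (n + 1) k (i.insertNth (n + 1) f) := maps_to_PFnk n k h2 hkn f i hp
      have hii' : i = i' := by
        apply pf_unique_top n hn1 _ hg.1
        · simp
        · rw [heq]; simp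
      subst hii'
      have hf : f = f' := by
        have := congrArg (Fin.removeNth i) heq
        rwa [Fin.removeNth_insertNth, Fin.removeNth_insertNth] at this
      rw [hf]
    · intro g hg
      obtain ⟨⟨hpos, hcount⟩, havoid, hhit⟩ := hg
      obtain ⟨i, hi⟩ := hhit (n + 1) (by omega) le_rfl
      set f : Fin n → ℕ := i.removeNth g with hfdef
      have hgf : i.insertNth (n + 1) f = g := by
        have h := Fin.insertNth_self_removeNth i g
        rw [hi] at h
        exact h
      refine ⟨(f, i), ?_, hgf⟩
      show IsPFnk n k f
      refine ⟨⟨?_, ?_⟩, ?_, ?_⟩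
      · intro j; exact hpos _
      · intro j
        have h := hcount j.castSucc
        simp only [Fin.coe_castSucc] at h
        rw [← hgf, count_insertNth] at h
        have : ¬ (n + 1 ≤ (j : ℕ) + 1) := by omega
        rw [if_neg this] at h
        omega
      · intro j; exact havoid _
      · intro m hkm hmn
        obtain ⟨j', hj'⟩ := hhit m hkm (by omega)
        have hji : j' ≠ i := by
          intro h; rw [h, hi] at hj'; omega
        obtain ⟨z, hz⟩ := Fin.exists_succAbove_eq hji
        exact ⟨z, by rw [hfdef]; show g (i.succAbove z) = m; rw [hz]; exact hj'⟩
  refine ⟨hbij, ?_⟩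
  have e1 : {g : Fin (n + 1) → ℕ // IsPFnk (n + 1) k g}
      ≃ ↥{p : (Fin n → ℕ) × Fin (n + 1) | IsPFnk n k p.1} :=
    (hbij.equiv _).symm
  have e2 : ↥{p : (Fin n → ℕ) × Fin (n + 1) | IsPFnk n k p.1}
      ≃ {f : Fin n → ℕ // IsPFnk n k f} × Fin (n + 1) :=
    { toFun := fun p => (⟨p.1.1, p.2⟩, p.1.2)
      invFun := fun q => ⟨(q.1.1, q.2), q.1.2⟩
      left_inv := fun p => rfl
      right_inv := fun q => rfl }
  have hfin : Nat.card (Fin (n + 1)) = n + 1 := by simp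
  rw [Nat.card_congr (e1.trans e2), Nat.card_prod, hfin, mul_comm]
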